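/- Let C be an [n,k,n-k+1] MDS code over F_{q^m} and B a basis of F_{q^m} over F_q. Extend each length-m block of Φ_B by an overall parity check (appending the negative of the sum of the m coordinates in that block). The resulting code over F_q has length (m+1)n, dimension mk, and minimum distance at least 2(n-k+1). -/

import Mathlib

/-- Coordinatewise expansion in a basis, with an overall parity check appended to
each length-`m` block. -/
noncomputable def expandExt {K L : Type*} [Field K] [Field L] [Algebra K L] {m n : ℕ}
    (B : Module.Basis (Fin m) K L) (x : Fin n → L) : Fin n × Fin (m + 1) → K :=
  fun p => if h : (p.2 : ℕ) < m then B.repr (x p.1) ⟨p.2, h⟩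
           else -(∑ j, B.repr (x p.1) j)

/-!
The expansion map is `K`-linear, and every nonzero coordinate `x i` of `x` becomes a nonzero
block of zero sum, which has weight at least `2` since a vector of weight `1` sums to its only
nonzero entry. Hence `2 * wt x ≤ wt (expandExt B x)`, which gives the distance bound and, applied
to the kernel, injectivity; the dimension is then `[L : K] * dim C = m * k`.
-/

open Finset

section Hamming

variable {ι κ M : Type*} [Fintype ι] [Fintype κ] [AddCommMonoid M] [DecidableEq M]

theorem hammingNorm_prod_eq_sum (v : ι × κ → M) :
    hammingNorm v = ∑ i, hammingNorm fun j => v (i, j) := by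
  simp only [hammingNorm, card_filter, Fintype.sum_prod_type]

theorem two_le_hammingNorm_of_sum_eq_zero {w : ι → M} (hw : w ≠ 0) (hsum : ∑ i, w i = 0) :
    2 ≤ hammingNorm w := by
  have hpos : 0 < hammingNorm w := hammingNorm_pos_iff.mpr hw
  by_contra! hlt
  obtain ⟨i, hi⟩ := card_eq_one.mp (show hammingNorm w = 1 by omega)
  have hwi : w i ≠ 0 := by simpa using hi.superset (mem_singleton_self i)
  rw [← sum_filter_ne_zero, hi, sum_singleton] at hsum
  exact hwi hsum

end Hamming

section Expansion

variable {K L : Type*} [Field K] [Field L] [Algebra K L] {m n : ℕ}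
  (B : Module.Basis (Fin m) K L)

@[simp]
theorem expandExt_castSucc (x : Fin n → L) (i : Fin n) (j : Fin m) :
    expandExt B x (i, j.castSucc) = B.repr (x i) j := by
  simp [expandExt]

@[simp]
theorem expandExt_last (x : Fin n → L) (i : Fin n) :
    expandExt B x (i, Fin.last m) = -∑ j, B.repr (x i) j := by
  simp [expandExt]

theorem sum_expandExt_block (x : Fin n → L) (i : Fin n) :
    ∑ j, expandExt B x (i, j) = 0 := by
  simp [Fin.sum_univ_castSucc]

theorem expandExt_block_ne_zero {x : Fin n → L} {i : Fin n} (hx : x i ≠ 0) :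
    (fun j => expandExt B x (i, j)) ≠ 0 := by
  intro h
  refine hx (B.repr.injective (Finsupp.ext fun j => ?_))
  simpa using congrFun h j.castSucc

theorem two_mul_hammingNorm_le_hammingNorm_expandExt [DecidableEq K] [DecidableEq L]
    (x : Fin n → L) : 2 * hammingNorm x ≤ hammingNorm (expandExt B x) := by
  rw [hammingNorm_prod_eq_sum, hammingNorm, card_filter, mul_sum]
  gcongr with i
  split_ifs with hx
  · exact two_le_hammingNorm_of_sum_eq_zero (expandExt_block_ne_zero B hx)
      (sum_expandExt_block B x i)
  · exact Nat.zero_le _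

noncomputable def expandExtLinearMap : (Fin n → L) →ₗ[K] (Fin n × Fin (m + 1) → K) where
  toFun := expandExt B
  map_add' x y := by
    funext p
    by_cases h : (p.2 : ℕ) < m <;> simp [expandExt, h, sum_add_distrib, add_comm]
  map_smul' a x := by
    funext p
    by_cases h : (p.2 : ℕ) < m <;> simp [expandExt, h, mul_sum]

@[simp]
theorem coe_expandExtLinearMap : ⇑(expandExtLinearMap (n := n) B) = expandExt B := rfl

theorem expandExtLinearMap_injective : Function.Injective (expandExtLinearMap (n := n) B) := by
  classical
  refine (injective_iff_map_eq_zero _).mpr fun x hx => hammingNorm_eq_zero.mp ?_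
  have : 2 * hammingNorm x ≤ hammingNorm (expandExtLinearMap B x) :=
    two_mul_hammingNorm_le_hammingNorm_expandExt B x
  rw [hx, hammingNorm_zero] at this
  omega

end Expansion

theorem stmt3_general (K L : Type) [Field K] [Field L] [Algebra K L]
    [DecidableEq K] [DecidableEq L]
    (m n k : ℕ) (hdim : Module.finrank K L = m)
    (B : Module.Basis (Fin m) K L) (C : Submodule L (Fin n → L))
    (hk : Module.finrank L C = k)
    (hd : ∀ x ∈ C, x ≠ 0 → n - k + 1 ≤ hammingNorm x) :
    ∃ D : Submodule K (Fin n × Fin (m + 1) → K),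
      (D : Set (Fin n × Fin (m + 1) → K)) = expandExt B '' (C : Set (Fin n → L)) ∧
      Module.finrank K D = m * k ∧
      ∀ v ∈ D, v ≠ 0 → 2 * (n - k + 1) ≤ hammingNorm v := by
  let f := expandExtLinearMap (n := n) B
  refine ⟨(C.restrictScalars K).map f, by simp [f], ?_, ?_⟩
  · rw [← (Submodule.equivMapOfInjective f (expandExtLinearMap_injective B) _).finrank_eq,
      ← hdim, ← hk]
    exact (Module.finrank_mul_finrank K L C).symm
  · rintro _ ⟨x, hxC, rfl⟩ hv
    have hx : x ≠ 0 := by rintro rfl; exact hv (map_zero f)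
    calc 2 * (n - k + 1) ≤ 2 * hammingNorm x := by have := hd x hxC hx; omega
      _ ≤ hammingNorm (f x) := two_mul_hammingNorm_le_hammingNorm_expandExt B x

/-- expanding an `[n,k,n-k+1]` MDS code over `F_{q^m}` in a basis and
appending a parity check to each block gives an `[(m+1)n, mk]` code over `F_q` with
minimum distance at least `2(n-k+1)`. -/
theorem stmt3 (K L : Type) [Field K] [Field L] [Algebra K L] [Fintype K] [Fintype L]
    [DecidableEq K] [DecidableEq L]
    (m n k : ℕ) (hm : 0 < m) (hkn : k ≤ n) (hdim : Module.finrank K L = m)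
    (B : Module.Basis (Fin m) K L) (C : Submodule L (Fin n → L))
    (hk : Module.finrank L C = k)
    (hd : ∀ x ∈ C, x ≠ 0 → n - k + 1 ≤ hammingNorm x) :
    ∃ D : Submodule K (Fin n × Fin (m + 1) → K),
      (D : Set (Fin n × Fin (m + 1) → K)) = expandExt B '' (C : Set (Fin n → L)) ∧
      Module.finrank K D = m * k ∧
      ∀ v ∈ D, v ≠ 0 → 2 * (n - k + 1) ≤ hammingNorm v :=
  stmt3_general K L m n k hdim B C hk hd
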